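/- arXiv:2111.06708 — 2 statements merged into one kernel-verified Lean document; each statement's English description precedes it below -/
import Mathlib

section
/- Let 0 < α < 1 with a_i and p_n as in the L1 scheme. Then Γ(2-α) Σ_{j=1}^{n} p_{n-j} ≤ n^α / Γ(1+α) for every n ≥ 1. -/
noncomputable def L1a (α : ℝ) (i : ℕ) : ℝ :=
  ((i : ℝ) + 1) ^ (1 - α) - (i : ℝ) ^ (1 - α)

noncomputable def L1p (α : ℝ) : ℕ → ℝ
  | 0 => 1
  | n + 1 =>
      ∑ j ∈ (Finset.range (n + 1)).attach,
        (L1a α (n - j.1) - L1a α (n + 1 - j.1)) * L1p α j.1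
termination_by n => n
decreasing_by exact Finset.mem_range.mp j.2

/-!
Write `b m = (m + 1) ^ α - m ^ α`. Since `a 0 = 1`, the recursion for `p` says exactly that
`∑ i ≤ N, a (N - i) * p i = 1` for every `N`, so `p` inverts the L1 operator
`(L v) j = ∑ m < j, a (j - 1 - m) * v m`, i.e.
`∑ j ∈ [1, n], p (n - j) * (L b) j = ∑ m < n, b m = n ^ α`.
As `p ≥ 0` (`a` decreases by concavity of `t ^ (1 - α)`), it suffices that
`Γ(1 + α) Γ(2 - α) ≤ (L b) j` for `j ≥ 1`. By the Beta integral the left side is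
`α (1 - α) ∫₀ʲ u ^ (α - 1) (j - u) ^ (-α) du`; on each cell `[m, m + 1]` the first factor
decreases and the second increases, so Chebyshev's integral inequality bounds the cell by the
product of the two cell integrals, which is `b m * a (j - 1 - m)`.
-/

section

open MeasureTheory Set

theorem AntivaryOn.measureReal_univ_mul_integral_mul_le {X : Type*} [MeasurableSpace X]
    {μ : Measure X} [IsFiniteMeasure μ] {f g : X → ℝ} {s : Set X} (h : AntivaryOn f g s)
    (hs : ∀ᵐ x ∂μ, x ∈ s) (hf : Integrable f μ) (hg : Integrable g μ)
    (hfg : Integrable (fun x => f x * g x) μ) :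
    μ.real univ * ∫ x, f x * g x ∂μ ≤ (∫ x, f x ∂μ) * ∫ x, g x ∂μ := by
  have inner : ∀ᵐ x ∂μ,
      μ.real univ * (f x * g x) + ∫ y, f y * g y ∂μ ≤
        f x * (∫ y, g y ∂μ) + g x * ∫ y, f y ∂μ := by
    filter_upwards [hs] with x hx
    have := integral_mono_ae (f := fun y => f x * g x + f y * g y)
      (g := fun y => f x * g y + f y * g x) ((integrable_const _).add hfg)
      ((hg.const_mul _).add (hf.mul_const _))
      (hs.mono fun y hy => antivaryOn_iff_mul_rearrangement.mp h hx hy)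
    rwa [integral_add (integrable_const _) hfg, integral_const, smul_eq_mul,
      integral_add (hg.const_mul _) (hf.mul_const _), integral_const_mul, integral_mul_const,
      mul_comm (∫ y, f y ∂μ)] at this
  have := integral_mono_ae (f := fun x => μ.real univ * (f x * g x) + ∫ y, f y * g y ∂μ)
    (g := fun x => f x * (∫ y, g y ∂μ) + g x * ∫ y, f y ∂μ)
    ((hfg.const_mul _).add (integrable_const _)) ((hf.mul_const _).add (hg.mul_const _)) inner
  rw [integral_add (hfg.const_mul _) (integrable_const _), integral_const, smul_eq_mul,
    integral_add (hf.mul_const _) (hg.mul_const _), integral_const_mul, integral_mul_const,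
    integral_mul_const] at this
  linarith

theorem AntivaryOn.mul_intervalIntegral_mul_le {f g : ℝ → ℝ} {a b : ℝ} (hab : a ≤ b)
    (h : AntivaryOn f g (Ioo a b)) (hf : IntervalIntegrable f volume a b)
    (hg : IntervalIntegrable g volume a b)
    (hfg : IntervalIntegrable (fun x => f x * g x) volume a b) :
    (b - a) * ∫ x in a..b, f x * g x ≤ (∫ x in a..b, f x) * ∫ x in a..b, g x := by
  simp only [intervalIntegral.integral_of_le hab, integral_Ioc_eq_integral_Ioo]
  rw [intervalIntegrable_iff_integrableOn_Ioo_of_le hab] at hf hg hfg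
  have := h.measureReal_univ_mul_integral_mul_le (ae_restrict_mem measurableSet_Ioo) hf hg hfg
  rwa [measureReal_restrict_apply_univ, Real.volume_real_Ioo_of_le hab] at this

theorem intervalIntegrable_rpow_mul_sub_rpow_left {p : ℝ} (hp : 0 < p) (q : ℝ) {T : ℝ}
    (hT : 0 < T) :
    IntervalIntegrable (fun u => u ^ (p - 1) * (T - u) ^ (q - 1)) volume 0 (T / 2) := by
  refine (intervalIntegral.intervalIntegrable_rpow' (by linarith)).mul_continuousOn ?_
  intro u hu
  rw [uIcc_of_le (by positivity)] at hu
  exact ((continuousAt_const.sub continuousAt_id).rpow_const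
    (Or.inl (show T - u ≠ 0 by linarith [hu.2]))).continuousWithinAt

theorem intervalIntegrable_rpow_mul_sub_rpow {p q T : ℝ} (hp : 0 < p) (hq : 0 < q) (hT : 0 < T) :
    IntervalIntegrable (fun u => u ^ (p - 1) * (T - u) ^ (q - 1)) volume 0 T := by
  refine (intervalIntegrable_rpow_mul_sub_rpow_left hp q hT).trans ?_
  have := (intervalIntegrable_rpow_mul_sub_rpow_left hq p hT).comp_sub_left T
  simp only [sub_sub_cancel, sub_zero, show T - T / 2 = T / 2 by ring] at this
  simpa only [mul_comm] using this.symm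

theorem integral_rpow_mul_sub_rpow {p q T : ℝ} (hp : 0 < p) (hq : 0 < q) (hT : 0 < T) :
    ∫ u in (0)..T, u ^ (p - 1) * (T - u) ^ (q - 1) =
      T ^ (p + q - 1) * (Real.Gamma p * Real.Gamma q / Real.Gamma (p + q)) := by
  have hbeta : Complex.betaIntegral p q = Real.Gamma p * Real.Gamma q / Real.Gamma (p + q) := by
    have := Complex.Gamma_mul_Gamma_eq_betaIntegral (s := p) (t := q) (by simpa) (by simpa)
    rw [← Complex.ofReal_add, Complex.Gamma_ofReal, Complex.Gamma_ofReal,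
      Complex.Gamma_ofReal] at this
    rw [eq_div_iff (by exact_mod_cast (Real.Gamma_pos_of_pos (add_pos hp hq)).ne'), this, mul_comm]
  have hcast : ((∫ u in (0)..T, u ^ (p - 1) * (T - u) ^ (q - 1) : ℝ) : ℂ) =
      ∫ u in (0)..T, (u : ℂ) ^ ((p : ℂ) - 1) * ((T : ℂ) - u) ^ ((q : ℂ) - 1) := by
    rw [← intervalIntegral.integral_ofReal]
    refine intervalIntegral.integral_congr fun u hu => ?_
    rw [uIcc_of_le hT.le] at hu
    simp only [Complex.ofReal_mul, ← Complex.ofReal_sub]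
    rw [Complex.ofReal_cpow hu.1, Complex.ofReal_cpow (by linarith [hu.2])]
    push_cast; rfl
  apply Complex.ofReal_injective
  rw [hcast, Complex.betaIntegral_scaled p q hT, hbeta, Complex.ofReal_mul,
    Complex.ofReal_cpow hT.le]
  push_cast; rfl

end

open Finset MeasureTheory

theorem L1p_succ (α : ℝ) (n : ℕ) :
    L1p α (n + 1) = ∑ j ∈ range (n + 1), (L1a α (n - j) - L1a α (n + 1 - j)) * L1p α j := by
  rw [L1p.eq_2]
  exact sum_attach (range (n + 1)) fun j => (L1a α (n - j) - L1a α (n + 1 - j)) * L1p α j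

section

variable {α : ℝ}

theorem L1a_zero (hα1 : α < 1) : L1a α 0 = 1 := by
  simp [L1a, Real.zero_rpow (sub_ne_zero.mpr hα1.ne')]

theorem L1a_succ_le (hα : 0 ≤ α) (hα1 : α ≤ 1) (i : ℕ) : L1a α (i + 1) ≤ L1a α i := by
  have := (Real.concaveOn_rpow (by linarith : 0 ≤ 1 - α) (by linarith)).slope_anti_adjacent
    (x := i) (y := i + 1) (z := i + 2) (Set.mem_Ici.mpr (by positivity))
    (Set.mem_Ici.mpr (by positivity)) (by linarith) (by linarith)
  simp only [L1a, Nat.cast_succ]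
  norm_num [add_assoc] at this ⊢
  linarith

theorem L1p_nonneg (hα : 0 ≤ α) (hα1 : α ≤ 1) (n : ℕ) : 0 ≤ L1p α n := by
  induction n using Nat.strong_induction_on with
  | _ n ih =>
    rcases n with _ | n
    · simp [L1p]
    · rw [L1p_succ]
      refine sum_nonneg fun j hj => mul_nonneg ?_ (ih j (mem_range.mp hj))
      rw [show n + 1 - j = n - j + 1 by rw [mem_range] at hj; omega]
      exact sub_nonneg.mpr (L1a_succ_le hα hα1 _)

theorem sum_L1a_mul_L1p (hα1 : α < 1) (m : ℕ) :
    ∑ j ∈ range (m + 1), L1a α (m - j) * L1p α j = 1 := by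
  induction m with
  | zero => simp [L1p, L1a_zero hα1]
  | succ m ih =>
    rw [sum_range_succ, Nat.sub_self, L1a_zero hα1, one_mul, L1p_succ, ← ih,
      ← sum_add_distrib]
    exact sum_congr rfl fun j _ => by ring

theorem sum_Ioc_L1p_mul_L1a (hα1 : α < 1) {m n : ℕ} (hmn : m < n) :
    ∑ j ∈ Ioc m n, L1p α (n - j) * L1a α (j - 1 - m) = 1 := by
  rw [← sum_L1a_mul_L1p hα1 (n - 1 - m)]
  refine sum_nbij' (fun j => n - j) (fun t => n - t) ?_ ?_ ?_ ?_ ?_ <;> intro j hj <;>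
    simp only [mem_Ioc, mem_range] at hj ⊢
  any_goals omega
  rw [mul_comm]; congr 2; omega

theorem sum_Icc_L1p_mul_sum_L1a_mul (hα1 : α < 1) (n : ℕ) (b : ℕ → ℝ) :
    ∑ j ∈ Icc 1 n, L1p α (n - j) * ∑ m ∈ range j, L1a α (j - 1 - m) * b m =
      ∑ m ∈ range n, b m := by
  simp_rw [mul_sum, ← mul_assoc]
  rw [sum_comm' (t' := range n) (s' := fun m => Ioc m n) (by intro j m; simp only [mem_Icc, mem_range, mem_Ioc]; omega)]
  exact sum_congr rfl fun m hm => by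
    rw [← sum_mul, sum_Ioc_L1p_mul_L1a hα1 (mem_range.mp hm), one_mul]

theorem intervalIntegrable_rpow_mul_sub_rpow_neg (hα : 0 < α) (hα1 : α < 1) {T a b : ℝ}
    (ha : 0 ≤ a) (hab : a < b) (hbT : b ≤ T) :
    IntervalIntegrable (fun u => u ^ (α - 1) * (T - u) ^ (-α)) volume a b := by
  have := intervalIntegrable_rpow_mul_sub_rpow hα (by linarith : 0 < 1 - α) (by linarith : 0 < T)
  rw [sub_sub_cancel_left] at this
  refine this.mono_set ?_
  rw [Set.uIcc_of_le hab.le, Set.uIcc_of_le (by linarith)]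
  exact Set.Icc_subset_Icc ha hbT

theorem mul_integral_rpow_mul_sub_rpow_le (hα : 0 < α) (hα1 : α < 1) {m j : ℕ} (hmj : m < j) :
    α * (1 - α) * ∫ u in (m : ℝ)..m + 1, u ^ (α - 1) * ((j : ℝ) - u) ^ (-α) ≤
      (((m : ℝ) + 1) ^ α - (m : ℝ) ^ α) * L1a α (j - 1 - m) := by
  have hmj' : (m : ℝ) + 1 ≤ j := by exact_mod_cast hmj
  have hm : (0 : ℝ) ≤ m := m.cast_nonneg
  have hanti : AntivaryOn (fun u : ℝ => u ^ (α - 1)) (fun u => ((j : ℝ) - u) ^ (-α))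
      (Set.Ioo (m : ℝ) (m + 1)) := by
    refine AntitoneOn.antivaryOn ?_ fun u hu v hv huv => ?_
    · exact (Real.antitoneOn_rpow_Ioi_of_exponent_nonpos (by linarith)).mono
        fun u hu => hm.trans_lt hu.1
    · exact Real.rpow_le_rpow_of_nonpos (by linarith [hv.2]) (by linarith) (by linarith)
  have hf : IntervalIntegrable (fun u : ℝ => u ^ (α - 1)) volume m (m + 1) :=
    intervalIntegral.intervalIntegrable_rpow' (by linarith)
  have hg : IntervalIntegrable (fun u => ((j : ℝ) - u) ^ (-α)) volume m (m + 1) := by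
    have := (intervalIntegral.intervalIntegrable_rpow' (a := (j : ℝ) - m) (b := j - (m + 1))
      (by linarith : -1 < -α)).comp_sub_left j
    simpa only [sub_sub_cancel] using this
  have hfg := intervalIntegrable_rpow_mul_sub_rpow_neg hα hα1 hm (lt_add_one _) hmj'
  have hcheb := hanti.mul_intervalIntegral_mul_le (by linarith) hf hg hfg
  have hint_f :
      ∫ u in (m : ℝ)..m + 1, u ^ (α - 1) = (((m : ℝ) + 1) ^ α - (m : ℝ) ^ α) / α := by
    rw [integral_rpow (Or.inl (by linarith)), sub_add_cancel]
  have hint_g :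
      ∫ u in (m : ℝ)..m + 1, ((j : ℝ) - u) ^ (-α) = L1a α (j - 1 - m) / (1 - α) := by
    rw [intervalIntegral.integral_comp_sub_left (fun s => s ^ (-α)),
      integral_rpow (Or.inl (by linarith)), L1a, Nat.cast_sub (by omega), Nat.cast_sub (by omega)]
    push_cast
    ring_nf
  rw [add_sub_cancel_left, one_mul, hint_f, hint_g] at hcheb
  have h1α : 0 < 1 - α := by linarith
  calc α * (1 - α) * ∫ u in (m : ℝ)..m + 1, u ^ (α - 1) * ((j : ℝ) - u) ^ (-α)
      ≤ α * (1 - α) *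
          ((((m : ℝ) + 1) ^ α - (m : ℝ) ^ α) / α * (L1a α (j - 1 - m) / (1 - α))) :=
        mul_le_mul_of_nonneg_left hcheb (by positivity)
    _ = (((m : ℝ) + 1) ^ α - (m : ℝ) ^ α) * L1a α (j - 1 - m) := by field_simp

theorem Gamma_mul_Gamma_le_sum_L1a_mul (hα : 0 < α) (hα1 : α < 1) {j : ℕ} (hj : 0 < j) :
    Real.Gamma (1 + α) * Real.Gamma (2 - α) ≤
      ∑ m ∈ range j, L1a α (j - 1 - m) * (((m : ℝ) + 1) ^ α - (m : ℝ) ^ α) := by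
  have hj' : (0 : ℝ) < j := by exact_mod_cast hj
  have hbeta := integral_rpow_mul_sub_rpow hα (by linarith : 0 < 1 - α) hj'
  rw [sub_sub_cancel_left, show α + (1 - α) - 1 = 0 by ring, show α + (1 - α) = 1 by ring,
    Real.rpow_zero, Real.Gamma_one, div_one, one_mul] at hbeta
  have hsplit := intervalIntegral.sum_integral_adjacent_intervals (a := fun m : ℕ => (m : ℝ))
    (f := fun u => u ^ (α - 1) * ((j : ℝ) - u) ^ (-α)) (μ := volume) (n := j)
    fun m hm => by
      push_cast
      exact intervalIntegrable_rpow_mul_sub_rpow_neg hα hα1 m.cast_nonneg (lt_add_one _)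
        (by exact_mod_cast hm)
  push_cast at hsplit
  calc Real.Gamma (1 + α) * Real.Gamma (2 - α)
      = α * (1 - α) * (Real.Gamma α * Real.Gamma (1 - α)) := by
        rw [add_comm, Real.Gamma_add_one hα.ne', show 2 - α = 1 - α + 1 by ring,
          Real.Gamma_add_one (by linarith)]
        ring
    _ = ∑ m ∈ range j, α * (1 - α) *
          ∫ u in (m : ℝ)..m + 1, u ^ (α - 1) * ((j : ℝ) - u) ^ (-α) := by
        rw [← hbeta, ← hsplit, mul_sum]
    _ ≤ ∑ m ∈ range j, L1a α (j - 1 - m) * (((m : ℝ) + 1) ^ α - (m : ℝ) ^ α) :=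
        sum_le_sum fun m hm => by
          rw [mul_comm (L1a α _)]
          exact mul_integral_rpow_mul_sub_rpow_le hα hα1 (mem_range.mp hm)

end

theorem L1p_sum_bound_general (α : ℝ) (hα : 0 < α) (hα1 : α < 1) (n : ℕ) :
    Real.Gamma (2 - α) * ∑ j ∈ Finset.Icc 1 n, L1p α (n - j) ≤
      (n : ℝ) ^ α / Real.Gamma (1 + α) := by
  have htelescope := sum_range_sub (fun m : ℕ => (m : ℝ) ^ α) n
  push_cast at htelescope
  rw [Real.zero_rpow hα.ne', sub_zero] at htelescope
  rw [le_div_iff₀ (Real.Gamma_pos_of_pos (by linarith)), mul_comm, ← mul_assoc, mul_sum]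
  calc ∑ j ∈ Icc 1 n, Real.Gamma (1 + α) * Real.Gamma (2 - α) * L1p α (n - j)
      ≤ ∑ j ∈ Icc 1 n, L1p α (n - j) *
          ∑ m ∈ range j, L1a α (j - 1 - m) * (((m : ℝ) + 1) ^ α - (m : ℝ) ^ α) :=
        sum_le_sum fun j hj => by
          rw [mul_comm]
          exact mul_le_mul_of_nonneg_left
            (Gamma_mul_Gamma_le_sum_L1a_mul hα hα1 (mem_Icc.mp hj).1)
            (L1p_nonneg hα.le hα1.le _)
    _ = (n : ℝ) ^ α := by rw [sum_Icc_L1p_mul_sum_L1a_mul hα1, htelescope]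

/-- Γ(2-α) Σ_{j=1}^{n} p_{n-j} ≤ n^α / Γ(1+α) for every n ≥ 1. -/
theorem L1p_sum_bound (α : ℝ) (hα : 0 < α) (hα1 : α < 1) (n : ℕ) (hn : 1 ≤ n) :
    Real.Gamma (2 - α) * ∑ j ∈ Finset.Icc 1 n, L1p α (n - j) ≤
      (n : ℝ) ^ α / Real.Gamma (1 + α) :=
  L1p_sum_bound_general α hα hα1 n
end

section
/- Lower bound identity for discrete Caputo operator: Let 0 < α < 1, a_j = (j+1)^{1-α} - j^{1-α}, and let (w^j)_{j=0}^n be elements of a real inner product space. Define 𝔻^α w^n = (k^{-α}/Γ(2-α)) Σ_{j=1}^n a_{n-j}(w^j - w^{j-1}). Then ⟨𝔻^α w^n, w^n⟩ ≥ (k^{-α}/(2Γ(2-α))) Σ_{j=1}^n a_{n-j}(‖w^j‖² - ‖w^{j-1}‖²). -/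
open scoped RealInnerProductSpace

lemma L1a_pos {α : ℝ} (hα1 : α < 1) (i : ℕ) : 0 < L1a α i := by
  have : (i : ℝ) ^ (1 - α) < ((i : ℝ) + 1) ^ (1 - α) :=
    Real.rpow_lt_rpow (by positivity) (by linarith) (by linarith)
  simpa [L1a] using sub_pos.mpr this

lemma L1a_decreasing {α : ℝ} (hα : 0 < α) (hα1 : α < 1) (i : ℕ) :
    L1a α (i + 1) ≤ L1a α i := by
  have hc := Real.concaveOn_rpow (p := 1 - α) (by linarith) (by linarith)
  have hmid := hc.2 (Set.mem_Ici.mpr (by positivity : (0:ℝ) ≤ (i : ℝ)))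
    (Set.mem_Ici.mpr (by positivity : (0:ℝ) ≤ (i : ℝ) + 2))
    (by norm_num : (0:ℝ) ≤ 1/2) (by norm_num : (0:ℝ) ≤ 1/2)
    (by norm_num : (1:ℝ)/2 + 1/2 = 1)
  simp only [smul_eq_mul] at hmid
  have h1 : (1:ℝ)/2 * (i : ℝ) + 1/2 * ((i : ℝ) + 2) = (i : ℝ) + 1 := by ring
  rw [h1] at hmid
  simp only [L1a]
  push_cast
  have h2 : ((i : ℝ) + 1 + 1) = (i : ℝ) + 2 := by ring
  rw [h2]
  linarith

lemma abel_lower (b d : ℕ → ℝ) (hb0 : ∀ j, 0 ≤ b j) (hbm : ∀ j, b j ≤ b (j + 1))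
    (hd : ∀ j, 0 ≤ d j) (n : ℕ) :
    -(b n * d n) ≤ ∑ j ∈ Finset.Icc 1 n, b j * (d (j - 1) - d j) := by
  induction n with
  | zero => simp; nlinarith [hb0 0, hd 0]
  | succ n ih =>
    rw [Finset.sum_Icc_succ_top (by omega)]
    have h := hbm n
    have := hd n
    have := hd (n + 1)
    have := hb0 (n + 1)
    simp only [Nat.add_sub_cancel]
    nlinarith

/-- Lower bound for the discrete L1 Caputo operator tested against w^n:
⟨𝔻^α w^n, w^n⟩ ≥ (k^{-α}/(2Γ(2-α))) Σ_{j=1}^n a_{n-j}(‖w^j‖² - ‖w^{j-1}‖²). -/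
theorem discrete_caputo_lower_bound
    {H : Type*} [NormedAddCommGroup H] [InnerProductSpace ℝ H]
    (α k : ℝ) (hα : 0 < α) (hα1 : α < 1) (hk : 0 < k)
    (w : ℕ → H) (n : ℕ) (hn : 1 ≤ n) :
    ⟪(k ^ (-α) / Real.Gamma (2 - α)) •
        ∑ j ∈ Finset.Icc 1 n, L1a α (n - j) • (w j - w (j - 1)), w n⟫ ≥
      (k ^ (-α) / (2 * Real.Gamma (2 - α))) *
        ∑ j ∈ Finset.Icc 1 n, L1a α (n - j) * (‖w j‖ ^ 2 - ‖w (j - 1)‖ ^ 2) := by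
  set c : ℝ := k ^ (-α) / Real.Gamma (2 - α) with hc
  have hΓ : 0 < Real.Gamma (2 - α) := Real.Gamma_pos_of_pos (by linarith)
  have hcpos : 0 < c := div_pos (Real.rpow_pos_of_pos hk _) hΓ
  have hinner : ⟪c • ∑ j ∈ Finset.Icc 1 n, L1a α (n - j) • (w j - w (j - 1)), w n⟫ =
      c * ∑ j ∈ Finset.Icc 1 n, L1a α (n - j) * ⟪w j - w (j - 1), w n⟫ := by
    rw [real_inner_smul_left, sum_inner]
    congr 1
    exact Finset.sum_congr rfl fun j _ => real_inner_smul_left _ _ _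
  -- key inequality: 2 * Σ a ⟪δ, w n⟫ ≥ Σ a (‖w j‖² - ‖w (j-1)‖²)
  have key : ∑ j ∈ Finset.Icc 1 n, L1a α (n - j) * (‖w j‖ ^ 2 - ‖w (j - 1)‖ ^ 2) ≤
      2 * ∑ j ∈ Finset.Icc 1 n, L1a α (n - j) * ⟪w j - w (j - 1), w n⟫ := by
    have hsplit : ∀ j : ℕ,
        2 * ⟪w j - w (j - 1), w n⟫ =
          (‖w j‖ ^ 2 - ‖w (j - 1)‖ ^ 2) + (‖w n - w (j - 1)‖ ^ 2 - ‖w n - w j‖ ^ 2) := by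
      intro j
      have e1 : ‖w n - w j‖ ^ 2 = ‖w n‖ ^ 2 - 2 * ⟪w n, w j⟫ + ‖w j‖ ^ 2 :=
        norm_sub_sq_real _ _
      have e2 : ‖w n - w (j - 1)‖ ^ 2 = ‖w n‖ ^ 2 - 2 * ⟪w n, w (j - 1)⟫ + ‖w (j - 1)‖ ^ 2 :=
        norm_sub_sq_real _ _
      have e3 : ⟪w j - w (j - 1), w n⟫ = ⟪w n, w j⟫ - ⟪w n, w (j - 1)⟫ := by
        rw [inner_sub_left, real_inner_comm (w j), real_inner_comm (w (j-1))]
      linarith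
    have habel : 0 ≤ ∑ j ∈ Finset.Icc 1 n,
        L1a α (n - j) * (‖w n - w (j - 1)‖ ^ 2 - ‖w n - w j‖ ^ 2) := by
      have := abel_lower (fun j => L1a α (n - j)) (fun j => ‖w n - w j‖ ^ 2)
        (fun j => (L1a_pos hα1 _).le)
        (fun j => by
          show L1a α (n - j) ≤ L1a α (n - (j + 1))
          rcases Nat.lt_or_ge j n with h | h
          · have : n - j = (n - (j + 1)) + 1 := by omega
            rw [this]
            exact L1a_decreasing hα hα1 _
          · have : n - j = 0 := by omega
            have h2 : n - (j + 1) = 0 := by omega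
            simp [this, h2])
        (fun j => by positivity) n
      have hnn : ‖w n - w n‖ ^ 2 = 0 := by simp
      simp only [hnn, mul_zero, neg_zero] at this
      exact this
    calc ∑ j ∈ Finset.Icc 1 n, L1a α (n - j) * (‖w j‖ ^ 2 - ‖w (j - 1)‖ ^ 2)
        ≤ ∑ j ∈ Finset.Icc 1 n, L1a α (n - j) * (‖w j‖ ^ 2 - ‖w (j - 1)‖ ^ 2) +
          ∑ j ∈ Finset.Icc 1 n, L1a α (n - j) * (‖w n - w (j - 1)‖ ^ 2 - ‖w n - w j‖ ^ 2) := by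
          linarith
      _ = 2 * ∑ j ∈ Finset.Icc 1 n, L1a α (n - j) * ⟪w j - w (j - 1), w n⟫ := by
          rw [Finset.mul_sum, ← Finset.sum_add_distrib]
          refine Finset.sum_congr rfl fun j _ => ?_
          rw [mul_comm (2:ℝ), mul_assoc, mul_comm ⟪w j - w (j-1), w n⟫ 2, hsplit j]
          ring
  have hhalf : k ^ (-α) / (2 * Real.Gamma (2 - α)) = c / 2 := by
    rw [hc]; ring
  rw [hinner, hhalf, ge_iff_le]
  nlinarith [mul_le_mul_of_nonneg_left key hcpos.le]
end
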